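/- For every β > 0, θ > 0 and m ∈ ℝ, the map F(m) = N(m)/Z(m) is differentiable at m, and its derivative equals βθ times the variance of the probability density p_m; that is, F′(m) = βθ · ( ∫_ℝ x² p_m(x) dx − (∫_ℝ x p_m(x) dx)² ). -/

import Mathlib

open MeasureTheory Real

/-- `Hfun β θ m x = β·V(x) + (βθ/2)(x − m)²` with the double-well potential `V(x) = (x²−1)²`. -/
noncomputable def Hfun (β θ m x : ℝ) : ℝ :=
  β * (x ^ 2 - 1) ^ 2 + β * θ / 2 * (x - m) ^ 2

/-- `Zfun β θ m = ∫ exp(−H_m(x)) dx`, the normalizing constant. -/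
noncomputable def Zfun (β θ m : ℝ) : ℝ := ∫ x : ℝ, Real.exp (-(Hfun β θ m x))

/-- `Nfun β θ m = ∫ x·exp(−H_m(x)) dx`. -/
noncomputable def Nfun (β θ m : ℝ) : ℝ := ∫ x : ℝ, x * Real.exp (-(Hfun β θ m x))

/-- The one-step fixed-point map `F(m) = N(m)/Z(m)` (the mean of `p_m`). -/
noncomputable def Fmap (β θ m : ℝ) : ℝ := Nfun β θ m / Zfun β θ m

/-- The probability density `p_m(x) = exp(−H_m(x))/Z(m)`. -/
noncomputable def pdens (β θ m x : ℝ) : ℝ := Real.exp (-(Hfun β θ m x)) / Zfun β θ m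

/-!
Write `M_n(m) = ∫ xⁿ exp(−H_m(x)) dx`, so that `Z = M₀` and `N = M₁`. Since
`∂ₘ exp(−H_m(x)) = βθ (x − m) exp(−H_m(x))`, differentiating under the integral sign gives
`M_n' = βθ (M_{n+1} − m M_n)`; the Gaussian bound `exp(−H_m(x)) ≤ e^{5β/4} e^{−βx²}`, uniform in
`m`, supplies the dominating function. The quotient rule then gives
`F' = βθ (M₂/M₀ − (M₁/M₀)²)`, which is `βθ` times the variance of `p_m`.
-/

noncomputable def gibbsMoment (β θ : ℝ) (n : ℕ) (m : ℝ) : ℝ :=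
  ∫ x : ℝ, x ^ n * exp (-(Hfun β θ m x))

lemma Zfun_eq_gibbsMoment_zero (β θ : ℝ) : Zfun β θ = gibbsMoment β θ 0 := by
  funext m
  simp [Zfun, gibbsMoment]

lemma Nfun_eq_gibbsMoment_one (β θ : ℝ) : Nfun β θ = gibbsMoment β θ 1 := by
  funext m
  simp [Nfun, gibbsMoment]

lemma integral_pow_mul_pdens (β θ m : ℝ) (n : ℕ) :
    ∫ x : ℝ, x ^ n * pdens β θ m x = gibbsMoment β θ n m / Zfun β θ m := by
  simp only [pdens, gibbsMoment, mul_div_assoc', integral_div]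

lemma integrable_abs_pow_mul_exp_neg_mul_sq {b : ℝ} (hb : 0 < b) (n : ℕ) :
    Integrable fun x : ℝ => |x| ^ n * exp (-b * x ^ 2) := by
  have h := integrable_rpow_mul_exp_neg_mul_sq hb (s := n)
    (neg_one_lt_zero.trans_le (Nat.cast_nonneg n))
  simp_rw [rpow_natCast] at h
  refine h.abs.congr (ae_of_all _ fun x => ?_)
  simp only [abs_mul, abs_pow, abs_of_pos (exp_pos _)]

section Hfun

variable {β θ : ℝ}

lemma continuous_exp_neg_Hfun (m : ℝ) : Continuous fun x => exp (-(Hfun β θ m x)) := by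
  unfold Hfun
  fun_prop

lemma exp_neg_Hfun_le (hβ : 0 < β) (hθ : 0 ≤ θ) (m x : ℝ) :
    exp (-(Hfun β θ m x)) ≤ exp (5 * β / 4) * exp (-β * x ^ 2) := by
  rw [← exp_add, exp_le_exp, Hfun]
  -- `(x² − 1)² − x² + 5/4 = (x² − 3/2)²`
  nlinarith [sq_nonneg (x - m), sq_nonneg (x ^ 2 - 3 / 2), mul_nonneg hβ.le hθ]

lemma integrable_pow_mul_exp_neg_Hfun (hβ : 0 < β) (hθ : 0 ≤ θ) (n : ℕ) (m : ℝ) :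
    Integrable fun x : ℝ => x ^ n * exp (-(Hfun β θ m x)) := by
  refine ((integrable_abs_pow_mul_exp_neg_mul_sq hβ n).const_mul (exp (5 * β / 4))).mono'
    ((continuous_pow n).mul (continuous_exp_neg_Hfun m)).aestronglyMeasurable
    (ae_of_all _ fun x => ?_)
  rw [norm_mul, norm_pow, norm_eq_abs, norm_of_nonneg (exp_pos _).le, mul_left_comm]
  gcongr
  exact exp_neg_Hfun_le hβ hθ m x

lemma Zfun_pos (hβ : 0 < β) (hθ : 0 ≤ θ) (m : ℝ) : 0 < Zfun β θ m :=
  integral_exp_pos (by simpa using integrable_pow_mul_exp_neg_Hfun hβ hθ 0 m)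

lemma hasDerivAt_exp_neg_Hfun (x m : ℝ) :
    HasDerivAt (fun m => exp (-(Hfun β θ m x)))
      (β * θ * (x - m) * exp (-(Hfun β θ m x))) m := by
  have hsq : HasDerivAt (fun m : ℝ => (x - m) ^ 2) (2 * (x - m) ^ 1 * (-1)) m :=
    ((hasDerivAt_id m).const_sub x).pow 2
  have hH : HasDerivAt (fun m => -(Hfun β θ m x)) (β * θ * (x - m)) m :=
    ((hsq.const_mul (β * θ / 2)).const_add (β * (x ^ 2 - 1) ^ 2)).neg.congr_deriv (by ring)
  exact hH.exp.congr_deriv (mul_comm _ _)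

lemma norm_pow_mul_deriv_exp_neg_Hfun_le (hβ : 0 < β) (hθ : 0 ≤ θ) (n : ℕ)
    {m m' : ℝ} (hm' : |m' - m| < 1) (x : ℝ) :
    ‖x ^ n * (β * θ * (x - m') * exp (-(Hfun β θ m' x)))‖ ≤
      β * θ * exp (5 * β / 4) * ((|x| ^ (n + 1) + (|m| + 1) * |x| ^ n) * exp (-β * x ^ 2)) := by
  have hxm' : |x - m'| ≤ |x| + (|m| + 1) := by
    have := abs_sub_abs_le_abs_sub m' m
    linarith [abs_sub x m']
  rw [norm_eq_abs, abs_mul, abs_mul, abs_mul, abs_pow, abs_of_nonneg (mul_nonneg hβ.le hθ),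
    abs_of_pos (exp_pos _)]
  calc |x| ^ n * (β * θ * |x - m'| * exp (-(Hfun β θ m' x)))
      ≤ |x| ^ n * (β * θ * (|x| + (|m| + 1)) * (exp (5 * β / 4) * exp (-β * x ^ 2))) := by
        gcongr
        exact exp_neg_Hfun_le hβ hθ m' x
    _ = β * θ * exp (5 * β / 4) *
        ((|x| ^ (n + 1) + (|m| + 1) * |x| ^ n) * exp (-β * x ^ 2)) := by ring

lemma integral_pow_mul_deriv_exp_neg_Hfun (hβ : 0 < β) (hθ : 0 ≤ θ) (n : ℕ) (m : ℝ) :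
    ∫ x : ℝ, x ^ n * (β * θ * (x - m) * exp (-(Hfun β θ m x))) =
      β * θ * (gibbsMoment β θ (n + 1) m - m * gibbsMoment β θ n m) := by
  have hsplit : (fun x : ℝ => x ^ n * (β * θ * (x - m) * exp (-(Hfun β θ m x)))) =
      fun x => β * θ * (x ^ (n + 1) * exp (-(Hfun β θ m x))) -
        β * θ * m * (x ^ n * exp (-(Hfun β θ m x))) := by
    funext x
    ring
  rw [hsplit, integral_sub ((integrable_pow_mul_exp_neg_Hfun hβ hθ (n + 1) m).const_mul _)
      ((integrable_pow_mul_exp_neg_Hfun hβ hθ n m).const_mul _),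
    integral_const_mul, integral_const_mul, gibbsMoment, gibbsMoment]
  ring

theorem hasDerivAt_gibbsMoment (hβ : 0 < β) (hθ : 0 ≤ θ) (n : ℕ) (m : ℝ) :
    HasDerivAt (gibbsMoment β θ n)
      (β * θ * (gibbsMoment β θ (n + 1) m - m * gibbsMoment β θ n m)) m := by
  have hmeas : ∀ m', AEStronglyMeasurable (fun x : ℝ => x ^ n * exp (-(Hfun β θ m' x))) :=
    fun m' => ((continuous_pow n).mul (continuous_exp_neg_Hfun m')).aestronglyMeasurable
  have hmeas' : AEStronglyMeasurable
      (fun x : ℝ => x ^ n * (β * θ * (x - m) * exp (-(Hfun β θ m x)))) :=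
    ((continuous_pow n).mul ((continuous_const.mul (continuous_id.sub continuous_const)).mul
      (continuous_exp_neg_Hfun m))).aestronglyMeasurable
  have hbound : Integrable fun x : ℝ => β * θ * exp (5 * β / 4) *
      ((|x| ^ (n + 1) + (|m| + 1) * |x| ^ n) * exp (-β * x ^ 2)) :=
    (((integrable_abs_pow_mul_exp_neg_mul_sq hβ (n + 1)).add
      ((integrable_abs_pow_mul_exp_neg_mul_sq hβ n).const_mul (|m| + 1))).const_mul
      (β * θ * exp (5 * β / 4))).congr (ae_of_all _ fun x => by simp only [Pi.add_apply]; ring)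
  have hdom := hasDerivAt_integral_of_dominated_loc_of_deriv_le (μ := volume)
    (F' := fun m' x => x ^ n * (β * θ * (x - m') * exp (-(Hfun β θ m' x))))
    (Metric.ball_mem_nhds m one_pos) (.of_forall hmeas)
    (integrable_pow_mul_exp_neg_Hfun hβ hθ n m) hmeas'
    (ae_of_all _ fun x m' hm' => norm_pow_mul_deriv_exp_neg_Hfun_le hβ hθ n
      (by rwa [Metric.mem_ball, dist_eq] at hm') x) hbound
    (ae_of_all _ fun x m' _ => (hasDerivAt_exp_neg_Hfun x m').const_mul (x ^ n))
  rw [← integral_pow_mul_deriv_exp_neg_Hfun hβ hθ n m]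
  exact hdom.2

end Hfun

/-- `F(m) = N(m)/Z(m)` is differentiable at every `m`, with
`F′(m) = βθ·(∫ x² p_m(x) dx − (∫ x p_m(x) dx)²)`, i.e. βθ times the variance of `p_m`. -/
theorem stmt_3 (β θ : ℝ) (hβ : 0 < β) (hθ : 0 < θ) (m : ℝ) :
    HasDerivAt (Fmap β θ)
      (β * θ * ((∫ x : ℝ, x ^ 2 * pdens β θ m x) - (∫ x : ℝ, x * pdens β θ m x) ^ 2)) m := by
  have hZ := hasDerivAt_gibbsMoment hβ hθ.le 0 m
  have hN := hasDerivAt_gibbsMoment hβ hθ.le 1 m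
  have hZ_ne : gibbsMoment β θ 0 m ≠ 0 := by
    rw [← Zfun_eq_gibbsMoment_zero]
    exact (Zfun_pos hβ hθ.le m).ne'
  have hF : Fmap β θ = fun m => gibbsMoment β θ 1 m / gibbsMoment β θ 0 m := by
    funext m
    rw [Fmap, Nfun_eq_gibbsMoment_one, Zfun_eq_gibbsMoment_zero]
  rw [hF]
  refine (hN.div hZ hZ_ne).congr_deriv ?_
  have hmean := integral_pow_mul_pdens β θ m 1
  simp only [pow_one] at hmean
  rw [hmean, integral_pow_mul_pdens, Zfun_eq_gibbsMoment_zero]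
  field_simp
  ring
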